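/- arXiv:0707.1289 — 3 statements merged into one kernel-verified Lean document; each statement's English description precedes it below -/
import Mathlib

section
/- The quaternionic Cayley transform maps the punctured unit sphere into the Siegel domain boundary: if (q,p) ∈ ℍⁿ × ℍ satisfies |q|² + |p|² = 1 and p ≠ −1, then the point (q',p') with q'ᵃ = (1+p)⁻¹·qᵃ for each a and p' = (1+p)⁻¹(1−p) satisfies Re p' = |q'|². -/
/-! Writing `s = 1 + p`, we have `s⁻¹ = |s|⁻² s̄` and `Re (s̄ (1 - p)) = 1 - |p|²`, because
`Re (p̄ - p) = 0`; on the sphere this is `|q|²`. Left multiplication by `s⁻¹` scales `|q|²` by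
the same factor `|s|⁻²`, since the quaternion norm is multiplicative. -/

open scoped Quaternion

noncomputable section

def qnormSq {n : ℕ} (q : Fin n → ℍ[ℝ]) : ℝ := ∑ a, Quaternion.normSq (q a)

namespace Quaternion

theorem re_inv_mul {R : Type*} [Field R] [LinearOrder R] [IsStrictOrderedRing R] (a b : ℍ[R]) :
    (a⁻¹ * b).re = (normSq a)⁻¹ * (star a * b).re := by
  rw [inv_def, smul_mul_assoc, re_smul, smul_eq_mul]

theorem re_star_one_add_mul_one_sub {R : Type*} [CommRing R] (p : ℍ[R]) :
    (star (1 + p) * (1 - p)).re = 1 - normSq p := by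
  have hexpand : star (1 + p) * (1 - p) = 1 + (star p - p) - star p * p := by
    rw [star_add, star_one]
    noncomm_ring
  rw [hexpand, star_mul_self, re_sub, re_add, re_sub, re_star, sub_self, add_zero, re_one,
    re_coe]

end Quaternion

theorem qnormSq_mul_left {n : ℕ} (c : ℍ[ℝ]) (q : Fin n → ℍ[ℝ]) :
    qnormSq (fun a => c * q a) = Quaternion.normSq c * qnormSq q := by
  simp only [qnormSq, map_mul, Finset.mul_sum]

theorem cayley_sphere_to_siegel_general (n : ℕ) (q : Fin n → ℍ[ℝ]) (p : ℍ[ℝ])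
    (hsph : qnormSq q + Quaternion.normSq p = 1) :
    ((1 + p)⁻¹ * (1 - p)).re = qnormSq (fun a => (1 + p)⁻¹ * q a) := by
  calc ((1 + p)⁻¹ * (1 - p)).re
        = (Quaternion.normSq (1 + p))⁻¹ * (1 - Quaternion.normSq p) := by
        rw [Quaternion.re_inv_mul, Quaternion.re_star_one_add_mul_one_sub]
    _ = (Quaternion.normSq (1 + p))⁻¹ * qnormSq q := by
        rw [← hsph, add_sub_cancel_right]
    _ = qnormSq (fun a => (1 + p)⁻¹ * q a) := by
        rw [qnormSq_mul_left, Quaternion.normSq_inv]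

/-- the quaternionic Cayley transform maps the punctured unit sphere into
the Siegel domain boundary: if `(q,p) ∈ ℍⁿ × ℍ` satisfies `|q|² + |p|² = 1` and
`p ≠ −1`, then the point `(q',p')` with `q'ᵃ = (1+p)⁻¹·qᵃ` and `p' = (1+p)⁻¹(1−p)`
satisfies `Re p' = |q'|²`. -/
theorem cayley_sphere_to_siegel (n : ℕ) (q : Fin n → ℍ[ℝ]) (p : ℍ[ℝ])
    (hsph : qnormSq q + Quaternion.normSq p = 1) (hp : p ≠ -1) :
    ((1 + p)⁻¹ * (1 - p)).re = qnormSq (fun a => (1 + p)⁻¹ * q a) :=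
  cayley_sphere_to_siegel_general n q p hsph
end
end

section
/- The inverse quaternionic Cayley transform maps the Siegel domain boundary into the punctured unit sphere: if (q',p') ∈ ℍⁿ × ℍ satisfies Re p' = |q'|², then 1 + p' ≠ 0 (indeed Re(1+p') ≥ 1), the identity 4|q'|² + |1−p'|² = |1+p'|² holds, and the point (q,p) with qᵃ = 2(1+p')⁻¹·q'ᵃ and p = (1−p')(1+p')⁻¹ satisfies |q|² + |p|² = 1 and p ≠ −1. -/
open scoped Quaternion

noncomputable section

/-!
Since `|1 + p'|² - |1 - p'|² = 4 Re p'`, the Siegel condition `Re p' = |q'|²` gives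
`4|q'|² + |1 - p'|² = |1 + p'|²`; as `|·|²` is multiplicative on `ℍ`, left multiplication by
`(1 + p')⁻¹` divides every term by `|1 + p'|²`, landing on the unit sphere.
-/

open Quaternion

namespace Quaternion

theorem normSq_one_add (p : ℍ[ℝ]) : normSq (1 + p) = normSq (1 - p) + 4 * p.re := by
  simp only [normSq_def', re_add, imI_add, imJ_add, imK_add, re_sub, imI_sub, imJ_sub,
    imK_sub, re_one, imI_one, imJ_one, imK_one]
  ring

theorem normSq_two : normSq (2 : ℍ[ℝ]) = 4 :=
  (normSq_natCast (R := ℝ) 2).trans (by norm_num)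

instance : CharZero ℍ[ℝ] := charZero_of_injective_algebraMap (algebraMap ℝ ℍ[ℝ]).injective

end Quaternion

theorem qnormSq_nonneg {n : ℕ} (q : Fin n → ℍ[ℝ]) : 0 ≤ qnormSq q :=
  Finset.sum_nonneg fun _ _ => normSq_nonneg

theorem qnormSq_const_mul {n : ℕ} (c : ℍ[ℝ]) (q : Fin n → ℍ[ℝ]) :
    qnormSq (fun a => c * q a) = normSq c * qnormSq q := by
  simp only [qnormSq, map_mul, Finset.mul_sum]

theorem one_sub_mul_inv_one_add_ne_neg_one {R : Type*} [DivisionRing R] [CharZero R] (x : R) :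
    (1 - x) * (1 + x)⁻¹ ≠ -1 := by
  intro h
  by_cases hx : 1 + x = 0
  · simp [hx] at h
  · have h' : 1 - x = -(1 + x) := by
      rw [← neg_one_mul, ← h, inv_mul_cancel_right₀ hx]
    refine two_ne_zero (α := R) ?_
    calc (2 : R) = (1 - x) + (1 + x) := by rw [← one_add_one_eq_two]; abel
      _ = 0 := by rw [h', neg_add_cancel]

/-- the inverse quaternionic Cayley transform maps the Siegel domain
boundary into the punctured unit sphere: if `(q',p') ∈ ℍⁿ × ℍ` satisfies
`Re p' = |q'|²`, then `1 + p' ≠ 0` (indeed `Re(1+p') ≥ 1`), the identity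
`4|q'|² + |1−p'|² = |1+p'|²` holds, and the point `(q,p)` with `qᵃ = 2(1+p')⁻¹·q'ᵃ`
and `p = (1−p')(1+p')⁻¹` satisfies `|q|² + |p|² = 1` and `p ≠ −1`. -/
theorem cayley_siegel_to_sphere (n : ℕ) (q' : Fin n → ℍ[ℝ]) (p' : ℍ[ℝ])
    (hSigma : p'.re = qnormSq q') :
    1 + p' ≠ 0 ∧ (1 : ℝ) ≤ (1 + p').re ∧
    4 * qnormSq q' + Quaternion.normSq (1 - p') = Quaternion.normSq (1 + p') ∧
    qnormSq (fun a => 2 * (1 + p')⁻¹ * q' a)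
      + Quaternion.normSq ((1 - p') * (1 + p')⁻¹) = 1 ∧
    (1 - p') * (1 + p')⁻¹ ≠ -1 := by
  have hre : (1 : ℝ) ≤ (1 + p').re := by
    simpa [hSigma] using qnormSq_nonneg q'
  have hne : 1 + p' ≠ 0 := fun h => by norm_num [h] at hre
  have hnorm : 4 * qnormSq q' + normSq (1 - p') = normSq (1 + p') := by
    rw [normSq_one_add, hSigma]; ring
  refine ⟨hne, hre, hnorm, ?_, one_sub_mul_inv_one_add_ne_neg_one p'⟩
  have hnorm_ne : normSq (1 + p') ≠ 0 := normSq_eq_zero.not.mpr hne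
  rw [qnormSq_const_mul, map_mul, map_mul, map_inv₀, normSq_two]
  field_simp
  linarith
end
end

section
/- The composition 𝒞 ∘ 𝒞⁻¹ is the identity on the Siegel domain boundary: if (q',p') ∈ ℍⁿ × ℍ satisfies Re p' = |q'|², and (q,p) = (2(1+p')⁻¹q', (1−p')(1+p')⁻¹), then 1+p ≠ 0, (1+p)⁻¹q = q' and (1+p)⁻¹(1−p) = p'. -/
open scoped Quaternion

noncomputable section

/-- the composition `𝒞 ∘ 𝒞⁻¹` is the identity on the Siegel domain
boundary: if `(q',p') ∈ ℍⁿ × ℍ` satisfies `Re p' = |q'|²`, and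
`(q,p) = (2(1+p')⁻¹q', (1−p')(1+p')⁻¹)`, then `1+p ≠ 0`, `(1+p)⁻¹q = q'` and
`(1+p)⁻¹(1−p) = p'`. -/
theorem cayley_right_inverse (n : ℕ) (q' : Fin n → ℍ[ℝ]) (p' : ℍ[ℝ])
    (hSigma : p'.re = qnormSq q')
    (q : Fin n → ℍ[ℝ]) (p : ℍ[ℝ])
    (hq : q = fun a => 2 * (1 + p')⁻¹ * q' a) (hp : p = (1 - p') * (1 + p')⁻¹) :
    1 + p ≠ 0 ∧ (fun a => (1 + p)⁻¹ * q a) = q' ∧ (1 + p)⁻¹ * (1 - p) = p' := by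
  have hre : (0:ℝ) ≤ p'.re := hSigma ▸ Finset.sum_nonneg fun a _ => Quaternion.normSq_nonneg
  have h1 : (1:ℍ[ℝ]) + p' ≠ 0 := by
    intro h
    have : ((1:ℍ[ℝ]) + p').re = 0 := by rw [h]; simp
    simp [Quaternion.re_add] at this
    linarith
  have htwo : (2:ℍ[ℝ]) ≠ 0 := by
    intro h
    have := congrArg QuaternionAlgebra.re h
    rw [show ((2:ℍ[ℝ])) = 1 + 1 by norm_num] at this
    simp [Quaternion.re_add] at this
  have hinv : ((1:ℍ[ℝ]) + p') * (1 + p')⁻¹ = 1 := mul_inv_cancel₀ h1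
  have hinv' : ((1:ℍ[ℝ]) + p')⁻¹ * (1 + p') = 1 := inv_mul_cancel₀ h1
  have htw : (2:ℍ[ℝ])⁻¹ * 2 = 1 := inv_mul_cancel₀ htwo
  have h1p : 1 + p = 2 * (1 + p')⁻¹ := by
    rw [hp]
    calc (1:ℍ[ℝ]) + (1 - p') * (1 + p')⁻¹
        = (1 + p') * (1 + p')⁻¹ + (1 - p') * (1 + p')⁻¹ := by rw [hinv]
      _ = ((1 + p') + (1 - p')) * (1 + p')⁻¹ := (add_mul _ _ _).symm
      _ = 2 * (1 + p')⁻¹ := by norm_num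
  have h2 : ((2:ℍ[ℝ]) * (1 + p')⁻¹) ≠ 0 := mul_ne_zero htwo (inv_ne_zero h1)
  have hne : 1 + p ≠ 0 := h1p ▸ h2
  have hinv2 : (1 + p)⁻¹ = (1 + p') * (2:ℍ[ℝ])⁻¹ := by
    rw [h1p, mul_inv_rev, inv_inv]
  refine ⟨hne, ?_, ?_⟩
  · funext a
    rw [hq, hinv2]
    calc ((1:ℍ[ℝ]) + p') * 2⁻¹ * (2 * (1 + p')⁻¹ * q' a)
        = (1 + p') * (2⁻¹ * 2) * ((1 + p')⁻¹ * q' a) := by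
          simp only [mul_assoc]
      _ = q' a := by rw [htw, mul_one, ← mul_assoc, hinv, one_mul]
  · have h1mp : 1 - p = 2 * p' * (1 + p')⁻¹ := by
      rw [hp]
      calc (1:ℍ[ℝ]) - (1 - p') * (1 + p')⁻¹
          = (1 + p') * (1 + p')⁻¹ - (1 - p') * (1 + p')⁻¹ := by rw [hinv]
        _ = ((1 + p') - (1 - p')) * (1 + p')⁻¹ := (sub_mul _ _ _).symm
        _ = 2 * p' * (1 + p')⁻¹ := by
            congr 1
            noncomm_ring
    have hcomm : ((1:ℍ[ℝ]) + p') * p' = p' * (1 + p') := by noncomm_ring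
    rw [h1mp, hinv2]
    calc ((1:ℍ[ℝ]) + p') * 2⁻¹ * (2 * p' * (1 + p')⁻¹)
        = (1 + p') * (2⁻¹ * 2) * (p' * (1 + p')⁻¹) := by simp only [mul_assoc]
      _ = (1 + p') * p' * (1 + p')⁻¹ := by rw [htw, mul_one, mul_assoc]
      _ = p' * ((1 + p') * (1 + p')⁻¹) := by rw [hcomm, mul_assoc]
      _ = p' := by rw [hinv, mul_one]
end
end
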